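/- With the bilinear form B^ρ bounded and coercive uniformly in ρ, the solution (u₀^ρ(·,ω), u₁^ρ(·,·,ω)) of the truncated two-scale homogenized problem satisfies the a priori bounds ‖u₀^ρ(·,ω)‖_{H¹₀(D)} ≤ c and ‖u₁^ρ(·,·,ω)‖_{L²(D,H¹₀(Y^ρ))} ≤ c |Y^ρ|^{1/2}, where c depends only on the coercivity constant and ‖f‖_{H⁻¹(D)}, not on ρ or ω. -/

import Mathlib

/-!
Testing the variational equation with the solution itself, coercivity and the bound
`f u₀ ≤ ‖f‖ ‖u₀‖` give `c (‖u₀‖² + |Y^ρ|⁻¹ ‖u₁‖²) ≤ ‖f‖ ‖u₀‖`. Dropping the `u₁` term bounds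
`‖u₀‖` by `‖f‖ / c`; feeding this back bounds `|Y^ρ|⁻¹ ‖u₁‖²` by `(‖f‖ / c)²`.
-/

open MeasureTheory Matrix Filter

noncomputable section

/-- Euclidean norm of a vector in `ℝ^d`. -/
def vnorm {d : ℕ} (v : Fin d → ℝ) : ℝ := Real.sqrt (v ⬝ᵥ v)

/-- The truncated cube `Y^ρ = (-ρ,ρ)^d`. -/
def Yset (d : ℕ) (ρ : ℝ) : Set (Fin d → ℝ) := {y | ∀ i, |y i| < ρ}

/-- `|Y^ρ| = (2ρ)^d`. -/
def volY (d : ℕ) (ρ : ℝ) : ℝ := (2 * ρ) ^ d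

/-- The truncated two-scale bilinear form `B^ρ(ω)`, written in terms of gradient
representatives `g₀ = ∇w₀`, `g₁ = ∇_y w₁`, `h₀ = ∇φ₀`, `h₁ = ∇_y φ₁`. -/
def Bform (d : ℕ) {Ω : Type*} (T : (Fin d → ℝ) → Ω → Ω)
    (A : (Fin d → ℝ) → Ω → Matrix (Fin d) (Fin d) ℝ) (D : Set (Fin d → ℝ))
    (ρ : ℝ) (ω : Ω)
    (g₀ : (Fin d → ℝ) → Fin d → ℝ) (g₁ : (Fin d → ℝ) → (Fin d → ℝ) → Fin d → ℝ)
    (h₀ : (Fin d → ℝ) → Fin d → ℝ) (h₁ : (Fin d → ℝ) → (Fin d → ℝ) → Fin d → ℝ) : ℝ :=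
  (volY d ρ)⁻¹ * ∫ x in D, ∫ y in Yset d ρ,
    (A x (T y ω)).mulVec (g₀ x + g₁ x y) ⬝ᵥ (h₀ x + h₁ x y)

theorem le_inv_mul_of_mul_sq_le_mul {c F a : ℝ} (hc : 0 < c) (hF : 0 ≤ F) (ha : 0 ≤ a)
    (h : c * a ^ 2 ≤ F * a) : a ≤ c⁻¹ * F := by
  rcases ha.eq_or_lt with rfl | ha
  · positivity
  rw [le_inv_mul_iff₀ hc]
  exact le_of_mul_le_mul_right (by linarith) ha

theorem le_and_le_mul_sqrt_of_mul_add_le_mul {c w F a b : ℝ} (hc : 0 < c) (hw : 0 < w)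
    (hF : 0 ≤ F) (ha : 0 ≤ a) (h : c * (a ^ 2 + w⁻¹ * b ^ 2) ≤ F * a) :
    a ≤ c⁻¹ * F ∧ b ≤ c⁻¹ * F * √w := by
  have hb_term : 0 ≤ c * (w⁻¹ * b ^ 2) := by positivity
  have ha_le : a ≤ c⁻¹ * F := le_inv_mul_of_mul_sq_le_mul hc hF ha (by linarith)
  refine ⟨ha_le, ?_⟩
  have hb_sq : w⁻¹ * b ^ 2 ≤ (c⁻¹ * F) ^ 2 := by
    rw [sq (c⁻¹ * F), mul_assoc, le_inv_mul_iff₀ hc]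
    nlinarith [mul_le_mul_of_nonneg_left ha_le hF, sq_nonneg a]
  have hb_sq' : b ^ 2 ≤ (c⁻¹ * F) ^ 2 * w := by
    rwa [inv_mul_le_iff₀ hw, mul_comm] at hb_sq
  calc b ≤ |b| := le_abs_self b
    _ ≤ √((c⁻¹ * F) ^ 2 * w) := Real.abs_le_sqrt hb_sq'
    _ = c⁻¹ * F * √w := by
      rw [Real.sqrt_mul' _ hw.le, Real.sqrt_sq (by positivity)]

/-- **A priori bounds for the solution of the truncated two-scale homogenized problem.**
With `B^ρ` coercive uniformly in `ρ` (constant `c`), the solution `(u₀^ρ, u₁^ρ)` of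
`B^ρ(ω;(u₀^ρ,u₁^ρ),(φ₀,φ₁)) = f(φ₀)` satisfies `‖u₀^ρ‖ ≤ c⁻¹‖f‖` and
`‖u₁^ρ‖ ≤ c⁻¹‖f‖ |Y^ρ|^{1/2}`; the constants depend only on the coercivity constant and
`‖f‖_{H⁻¹(D)}`, not on `ρ` or `ω`. -/
theorem stmt1 {d : ℕ} {Ω : Type*} (T : (Fin d → ℝ) → Ω → Ω)
    (A : (Fin d → ℝ) → Ω → Matrix (Fin d) (Fin d) ℝ)
    (D : Set (Fin d → ℝ)) (ρ : ℝ) (hρ : 0 < ρ) (ω : Ω) (c : ℝ) (hc : 0 < c)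
    (V : Type*) [NormedAddCommGroup V] [InnerProductSpace ℝ V]
    (V₁ : Type*) [NormedAddCommGroup V₁] [InnerProductSpace ℝ V₁]
    (grad : V →ₗ[ℝ] ((Fin d → ℝ) → Fin d → ℝ))
    (grady : V₁ →ₗ[ℝ] ((Fin d → ℝ) → (Fin d → ℝ) → Fin d → ℝ))
    (f : V →L[ℝ] ℝ)
    -- uniform coercivity of `B^ρ(ω)`
    (hcoer : ∀ (w₀ : V) (w₁ : V₁),
      c * (‖w₀‖ ^ 2 + (volY d ρ)⁻¹ * ‖w₁‖ ^ 2)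
        ≤ Bform d T A D ρ ω (grad w₀) (grady w₁) (grad w₀) (grady w₁))
    (u₀ : V) (u₁ : V₁)
    -- the variational equation tested with the solution itself
    (heq : Bform d T A D ρ ω (grad u₀) (grady u₁) (grad u₀) (grady u₁) = f u₀) :
    ‖u₀‖ ≤ c⁻¹ * ‖f‖ ∧ ‖u₁‖ ≤ c⁻¹ * ‖f‖ * Real.sqrt (volY d ρ) := by
  have hvol : 0 < volY d ρ := pow_pos (by linarith) d
  refine le_and_le_mul_sqrt_of_mul_add_le_mul hc hvol (norm_nonneg f) (norm_nonneg u₀) ?_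
  calc c * (‖u₀‖ ^ 2 + (volY d ρ)⁻¹ * ‖u₁‖ ^ 2)
      ≤ Bform d T A D ρ ω (grad u₀) (grady u₁) (grad u₀) (grady u₁) := hcoer u₀ u₁
    _ = f u₀ := heq
    _ ≤ ‖f‖ * ‖u₀‖ := (le_abs_self _).trans (f.le_opNorm u₀)
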